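/- Let (X, 𝒜) be a measurable space with two finite measures λ and μ, where μ is a probability measure, and let T : X → X be measure-preserving and ergodic with respect to μ. Suppose there is a constant C > 0 with μ(A) ≥ C·λ(A) for every measurable A, and suppose (Δ_k)_{k ≥ 1} is a sequence of pairwise disjoint measurable sets covering X with λ(Δ_k) = 1/((k+1)(k+2)) for every k ≥ 1. Define f : X → ℝ by f(x) = k for x ∈ Δ_k. Then for μ-almost every x (and hence also for λ-almost every x), the Birkhoff averages diverge: (1/n)·∑_{j=0}^{n−1} f(Tʲx) → ∞ as n → ∞. -/

import Mathlib

/-!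
Fix `b < ∫ φ` for an integrable `φ`. The set of points where the Birkhoff sums of `b - φ` are
unbounded above is `T`-invariant, and Garsia's maximal ergodic theorem forbids it to have full
measure; by ergodicity it is null, so `S_n φ ≥ b n - c(x)` almost everywhere. Applied to the
truncations `min f M`, whose integrals tend to `∫ f dμ = ∞`, this makes the averages of `f` tend
to `∞` `μ`-a.e. The integral is infinite because `∫ f dλ = ∑ k / ((k + 1) (k + 2))` diverges
and `μ ≥ C λ`; the same domination gives `λ ≪ μ`, which transfers the conclusion to `λ`.
-/

open MeasureTheory Filter Set Function
open scoped ENNReal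

section MaximalErgodic

variable {X : Type*} {T : X → X} {ψ : X → ℝ}

/-- `maxBirkhoffSum T ψ N x = max (birkhoffSum T ψ 0 x, …, birkhoffSum T ψ N x)`. -/
noncomputable def maxBirkhoffSum (T : X → X) (ψ : X → ℝ) : ℕ → X → ℝ
  | 0 => fun _ => 0
  | N + 1 => fun x => max 0 (ψ x + maxBirkhoffSum T ψ N (T x))

theorem maxBirkhoffSum_nonneg : ∀ N x, 0 ≤ maxBirkhoffSum T ψ N x
  | 0, _ => le_rfl
  | _ + 1, _ => le_max_left _ _

theorem maxBirkhoffSum_le_succ : ∀ N x, maxBirkhoffSum T ψ N x ≤ maxBirkhoffSum T ψ (N + 1) x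
  | 0, x => maxBirkhoffSum_nonneg 1 x
  | N + 1, x => max_le_max le_rfl (add_le_add_right (maxBirkhoffSum_le_succ N (T x)) _)

theorem birkhoffSum_le_maxBirkhoffSum : ∀ N x, birkhoffSum T ψ N x ≤ maxBirkhoffSum T ψ N x
  | 0, x => (birkhoffSum_zero T ψ x).le
  | N + 1, x => by
    rw [birkhoffSum_succ']
    exact le_max_of_le_right (add_le_add_right (birkhoffSum_le_maxBirkhoffSum N (T x)) _)

theorem maxBirkhoffSum_sub_comp_le {N : ℕ} {x : X} (hx : 0 < maxBirkhoffSum T ψ N x) :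
    maxBirkhoffSum T ψ N x - maxBirkhoffSum T ψ N (T x) ≤ ψ x := by
  cases N with
  | zero => exact absurd hx (lt_irrefl 0)
  | succ N =>
    have hpos : 0 < ψ x + maxBirkhoffSum T ψ N (T x) := by
      simpa [maxBirkhoffSum] using hx
    have hrec : maxBirkhoffSum T ψ (N + 1) x = ψ x + maxBirkhoffSum T ψ N (T x) :=
      max_eq_right hpos.le
    linarith [maxBirkhoffSum_le_succ (T := T) (ψ := ψ) N (T x)]

variable [MeasurableSpace X] {μ : Measure X}

theorem measurable_maxBirkhoffSum (hT : Measurable T) (hψ : Measurable ψ) :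
    ∀ N, Measurable (maxBirkhoffSum T ψ N)
  | 0 => measurable_const
  | N + 1 => measurable_const.max (hψ.add ((measurable_maxBirkhoffSum hT hψ N).comp hT))

theorem integrable_maxBirkhoffSum (hT : MeasurePreserving T μ μ) (hψ : Integrable ψ μ) :
    ∀ N, Integrable (maxBirkhoffSum T ψ N) μ
  | 0 => integrable_zero X ℝ μ
  | N + 1 => by
    have h := (hψ.add (hT.integrable_comp_of_integrable
      (integrable_maxBirkhoffSum hT hψ N))).pos_part
    simp only [Pi.add_apply, Function.comp_apply, max_comm _ (0 : ℝ)] at h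
    exact h

/-- The maximal ergodic theorem. -/
theorem setIntegral_maxBirkhoffSum_pos_nonneg (hT : MeasurePreserving T μ μ)
    (hψ : Measurable ψ) (hψi : Integrable ψ μ) (N : ℕ) :
    0 ≤ ∫ x in {x | 0 < maxBirkhoffSum T ψ N x}, ψ x ∂μ := by
  set Q := maxBirkhoffSum T ψ N
  have hQ : Measurable Q := measurable_maxBirkhoffSum hT.measurable hψ N
  have hQi : Integrable Q μ := integrable_maxBirkhoffSum hT hψi N
  have hQTi : Integrable (Q ∘ T) μ := hT.integrable_comp_of_integrable hQi
  have hE : MeasurableSet {x | 0 < Q x} := measurableSet_lt measurable_const hQ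
  have hQ_eq : ∫ x in {x | 0 < Q x}, Q x ∂μ = ∫ x, Q x ∂μ :=
    setIntegral_eq_integral_of_forall_compl_eq_zero fun x hx =>
      le_antisymm (not_lt.1 hx) (maxBirkhoffSum_nonneg N x)
  have hQT_eq : ∫ x, Q (T x) ∂μ = ∫ x, Q x ∂μ := by
    rw [← integral_map hT.aemeasurable (by rw [hT.map_eq]; exact hQ.aestronglyMeasurable),
      hT.map_eq]
  calc 0 = ∫ x, Q x ∂μ - ∫ x, Q (T x) ∂μ := by rw [hQT_eq, sub_self]
    _ ≤ ∫ x in {x | 0 < Q x}, Q x ∂μ - ∫ x in {x | 0 < Q x}, Q (T x) ∂μ := by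
      rw [hQ_eq]
      exact sub_le_sub_left (setIntegral_le_integral hQTi
        (ae_of_all _ fun x => maxBirkhoffSum_nonneg N (T x))) _
    _ = ∫ x in {x | 0 < Q x}, (Q x - Q (T x)) ∂μ :=
      (integral_sub hQi.integrableOn hQTi.integrableOn).symm
    _ ≤ ∫ x in {x | 0 < Q x}, ψ x ∂μ :=
      setIntegral_mono_on (hQi.sub hQTi).integrableOn hψi.integrableOn hE
        fun x hx => maxBirkhoffSum_sub_comp_le hx

theorem integral_nonneg_of_ae_exists_birkhoffSum_pos (hT : MeasurePreserving T μ μ)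
    (hψ : Measurable ψ) (hψi : Integrable ψ μ)
    (h : ∀ᵐ x ∂μ, ∃ n, 0 < birkhoffSum T ψ n x) : 0 ≤ ∫ x, ψ x ∂μ := by
  set E : ℕ → Set X := fun N => {x | 0 < maxBirkhoffSum T ψ N x}
  have hE : ∀ N, MeasurableSet (E N) := fun N =>
    measurableSet_lt measurable_const (measurable_maxBirkhoffSum hT.measurable hψ N)
  have hE_mono : Monotone E := monotone_nat_of_le_succ fun N x hx =>
    hx.trans_le (maxBirkhoffSum_le_succ N x)
  have hE_univ : ⋃ N, E N =ᵐ[μ] (univ : Set X) := eventuallyEq_univ.2 <|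
    h.mono fun x ⟨n, hn⟩ => mem_iUnion.2 ⟨n, hn.trans_le (birkhoffSum_le_maxBirkhoffSum n x)⟩
  have hlim := tendsto_setIntegral_of_monotone hE hE_mono hψi.integrableOn
  rw [setIntegral_congr_set hE_univ, setIntegral_univ] at hlim
  exact ge_of_tendsto' hlim (setIntegral_maxBirkhoffSum_pos_nonneg hT hψ hψi)

end MaximalErgodic

section Ergodic

variable {X : Type*} {T : X → X}

theorem bddAbove_birkhoffSum_comp_iff (ψ : X → ℝ) (x : X) :
    BddAbove (range fun n => birkhoffSum T ψ n (T x)) ↔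
      BddAbove (range fun n => birkhoffSum T ψ n x) := by
  constructor
  · rintro ⟨c, hc⟩
    refine ⟨max 0 (ψ x + c), forall_mem_range.2 fun n => ?_⟩
    cases n with
    | zero => simp
    | succ n =>
      rw [birkhoffSum_succ']
      exact le_max_of_le_right (add_le_add_right (hc (mem_range_self n)) _)
  · rintro ⟨c, hc⟩
    refine ⟨c - ψ x, forall_mem_range.2 fun n => ?_⟩
    have := hc (mem_range_self (n + 1))
    rw [birkhoffSum_succ'] at this
    linarith

variable [MeasurableSpace X] {μ : Measure X}

theorem measurable_birkhoffSum (hT : Measurable T) {ψ : X → ℝ} (hψ : Measurable ψ) (n : ℕ) :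
    Measurable (birkhoffSum T ψ n) :=
  Finset.measurable_sum _ fun j _ => hψ.comp (hT.iterate j)

theorem Ergodic.ae_bddAbove_birkhoffSum (hT : Ergodic T μ) {ψ : X → ℝ} (hψ : Measurable ψ)
    (hψi : Integrable ψ μ) (hneg : ∫ x, ψ x ∂μ < 0) :
    ∀ᵐ x ∂μ, BddAbove (range fun n => birkhoffSum T ψ n x) := by
  have hE : MeasurableSet {x | BddAbove (range fun n => birkhoffSum T ψ n x)} :=
    measurableSet_bddAbove_range (measurable_birkhoffSum hT.measurable hψ)
  have hinv : T ⁻¹' {x | BddAbove (range fun n => birkhoffSum T ψ n x)} =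
      {x | BddAbove (range fun n => birkhoffSum T ψ n x)} :=
    ext fun x => bddAbove_birkhoffSum_comp_iff ψ x
  refine (hT.ae_mem_or_ae_notMem hE hinv).resolve_right fun hunb => hneg.not_ge ?_
  refine integral_nonneg_of_ae_exists_birkhoffSum_pos hT.toMeasurePreserving hψ hψi ?_
  filter_upwards [hunb] with x hx
  obtain ⟨_, ⟨n, rfl⟩, hn⟩ := not_bddAbove_iff.1 hx 0
  exact ⟨n, hn⟩

theorem Ergodic.ae_exists_le_birkhoffSum [IsProbabilityMeasure μ] (hT : Ergodic T μ)
    {φ : X → ℝ} (hφ : Measurable φ) (hφi : Integrable φ μ) {b : ℝ} (hb : b < ∫ x, φ x ∂μ) :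
    ∀ᵐ x ∂μ, ∃ c, ∀ n : ℕ, b * n - c ≤ birkhoffSum T φ n x := by
  have hψi : Integrable (fun x => b - φ x) μ := (integrable_const b).sub hφi
  have hneg : ∫ x, (b - φ x) ∂μ < 0 := by
    rw [integral_sub (integrable_const b) hφi, integral_const, probReal_univ, one_smul]
    linarith
  filter_upwards [hT.ae_bddAbove_birkhoffSum (measurable_const.sub hφ) hψi hneg]
    with x ⟨c, hc⟩
  refine ⟨c, fun n => ?_⟩
  have hconst : birkhoffSum T (fun _ => b) n x = n * b := by simp [birkhoffSum]
  have := hc (mem_range_self n)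
  rw [birkhoffSum_sub, hconst] at this
  linarith

end Ergodic

theorem exists_lt_integral_min_natCast {X : Type*} [MeasurableSpace X] {μ : Measure X}
    [IsFiniteMeasure μ] {f : X → ℝ} (hf : Measurable f)
    (hf0 : 0 ≤ᵐ[μ] f) (hfi : ∫⁻ x, ENNReal.ofReal (f x) ∂μ = ∞) (b : ℝ) :
    ∃ M : ℕ, b < ∫ x, min (f x) M ∂μ := by
  have hsup : ⨆ M : ℕ, ∫⁻ x, min (ENNReal.ofReal (f x)) M ∂μ = ∞ := by
    rw [← lintegral_iSup (fun M => hf.ennreal_ofReal.min measurable_const)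
      fun M N h x => min_le_min_left _ (Nat.cast_le.2 h)]
    simp_rw [← inf_iSup_eq, ENNReal.iSup_natCast]
    simpa using hfi
  obtain ⟨M, hM⟩ := lt_iSup_iff.1 (hsup ▸ ENNReal.ofReal_lt_top : ENNReal.ofReal b < _)
  refine ⟨M, ?_⟩
  rw [integral_eq_lintegral_of_nonneg_ae (hf0.mono fun x hx => le_min hx M.cast_nonneg)
    (hf.min measurable_const).aestronglyMeasurable]
  simp only [ENNReal.ofReal_min, ENNReal.ofReal_natCast]
  have hfin : ∫⁻ x, min (ENNReal.ofReal (f x)) M ∂μ ≠ ∞ :=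
    ((lintegral_mono fun x => min_le_right _ _).trans_lt
      (lintegral_const_lt_top (ENNReal.natCast_ne_top M))).ne
  rw [← ENNReal.ofReal_toReal hfin, ENNReal.ofReal_lt_ofReal_iff'] at hM
  exact hM.1

theorem Ergodic.ae_tendsto_birkhoffAverage_atTop {X : Type*} [MeasurableSpace X]
    {μ : Measure X} [IsProbabilityMeasure μ] {T : X → X} (hT : Ergodic T μ) {f : X → ℝ}
    (hf : Measurable f) (hf0 : 0 ≤ᵐ[μ] f) (hfi : ∫⁻ x, ENNReal.ofReal (f x) ∂μ = ∞) :
    ∀ᵐ x ∂μ, Tendsto (fun n => birkhoffAverage ℝ T f n x) atTop atTop := by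
  have h_eventually_ge :
      ∀ m : ℕ, ∀ᵐ x ∂μ, ∀ᶠ n in atTop, (m : ℝ) ≤ birkhoffAverage ℝ T f n x := by
    intro m
    obtain ⟨M, hM⟩ := exists_lt_integral_min_natCast hf hf0 hfi (m + 1)
    have hφi : Integrable (fun x => min (f x) M) μ :=
      (integrable_const (M : ℝ)).mono' (hf.min measurable_const).aestronglyMeasurable
        (hf0.mono fun x hx => by
          rw [Real.norm_of_nonneg (le_min hx M.cast_nonneg)]
          exact min_le_right _ _)
    filter_upwards [hT.ae_exists_le_birkhoffSum (hf.min measurable_const) hφi hM]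
      with x ⟨c, hc⟩
    obtain ⟨N, hN⟩ := exists_nat_ge c
    filter_upwards [eventually_ge_atTop (max N 1)] with n hn
    have hn1 : (1 : ℝ) ≤ n := by exact_mod_cast le_of_max_le_right hn
    have hnc : c ≤ n := hN.trans (by exact_mod_cast le_of_max_le_left hn)
    have hφf : birkhoffSum T (fun x => min (f x) M) n x ≤ birkhoffSum T f n x :=
      Finset.sum_le_sum fun j _ => min_le_left _ _
    rw [birkhoffAverage, smul_eq_mul, ← div_eq_inv_mul, le_div_iff₀ (by positivity)]
    nlinarith [hc n]
  filter_upwards [ae_all_iff.2 h_eventually_ge] with x hx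
  refine tendsto_atTop.2 fun b => ?_
  obtain ⟨m, hm⟩ := exists_nat_ge b
  exact (hx m).mono fun n hn => hm.trans hn

theorem measurable_of_eqOn_const_of_iUnion_eq_univ {X ι β : Type*} [MeasurableSpace X]
    [MeasurableSpace β] [Countable ι] {s : ι → Set X} (hs : ∀ i, MeasurableSet (s i))
    (hcover : ⋃ i, s i = univ) {f : X → β} {c : ι → β} (hf : ∀ i, EqOn f (fun _ => c i) (s i)) :
    Measurable f := by
  intro t _
  have hpre : f ⁻¹' t = ⋃ i ∈ {i | c i ∈ t}, s i := by
    ext x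
    obtain ⟨i, hi⟩ := mem_iUnion.1 (hcover ▸ mem_univ x)
    rw [mem_preimage, mem_iUnion₂]
    exact ⟨fun hx => ⟨i, by rwa [hf i hi] at hx, hi⟩, fun ⟨j, hj, hxj⟩ => by rwa [hf j hxj]⟩
  rw [hpre]
  exact .biUnion (to_countable _) fun i _ => hs i

theorem lintegral_eq_tsum_of_eqOn_const {X ι : Type*} [MeasurableSpace X] [Countable ι]
    {s : ι → Set X} (hs : ∀ i, MeasurableSet (s i)) (hd : Pairwise (Disjoint on s))
    (hcover : ⋃ i, s i = univ) {g : X → ℝ≥0∞} {c : ι → ℝ≥0∞}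
    (hg : ∀ i, EqOn g (fun _ => c i) (s i)) (ν : Measure X) :
    ∫⁻ x, g x ∂ν = ∑' i, c i * ν (s i) := by
  rw [← setLIntegral_univ, ← hcover, lintegral_iUnion hs hd]
  exact tsum_congr fun i => by rw [setLIntegral_congr_fun (hs i) (hg i), setLIntegral_const]

theorem ENNReal.tsum_succ_mul_one_div_succ_mul_succ_eq_top :
    ∑' k : ℕ, ((k : ℝ≥0∞) + 1) * (1 / ((k + 1 + 1) * (k + 1 + 2))) = ∞ := by
  by_contra h
  have hterm : ∀ k : ℕ, (((k : ℝ≥0∞) + 1) * (1 / ((k + 1 + 1) * (k + 1 + 2)))).toReal =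
      ((k : ℝ) + 1) / ((k + 2) * (k + 3)) := by
    intro k
    simp only [one_div, ENNReal.toReal_mul, ne_eq, ENNReal.natCast_ne_top, not_false_eq_true,
      ENNReal.one_ne_top, ENNReal.toReal_add, ENNReal.toReal_natCast, ENNReal.toReal_one,
      ENNReal.toReal_inv, ENNReal.add_eq_top, or_self, ENNReal.ofNat_ne_top, ENNReal.toReal_ofNat]
    field_simp
    ring
  have hsum : Summable fun k : ℕ => ((k : ℝ) + 1) / ((k + 2) * (k + 3)) :=
    (ENNReal.summable_toReal h).congr hterm
  have hharm : Summable fun k : ℕ => 1 / ((k : ℝ) + 3) := by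
    refine (hsum.mul_left 2).of_nonneg_of_le (fun k => by positivity) fun k => ?_
    rw [mul_div_assoc', div_le_div_iff₀ (by positivity) (by positivity)]
    nlinarith [k.cast_nonneg (α := ℝ)]
  exact Real.not_summable_one_div_natCast ((summable_nat_add_iff 3).1 (by simpa using hharm))

theorem lintegral_eq_top_of_smul_le {X : Type*} [MeasurableSpace X] {ν μ : Measure X}
    {c : ℝ≥0∞} (hc : c ≠ 0) (hle : c • ν ≤ μ) {g : X → ℝ≥0∞} (hg : ∫⁻ x, g x ∂ν = ∞) :
    ∫⁻ x, g x ∂μ = ∞ :=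
  eq_top_iff.2 <| calc
    ∞ = ∫⁻ x, g x ∂(c • ν) := by rw [lintegral_smul_measure, hg, smul_eq_mul, ENNReal.mul_top hc]
    _ ≤ ∫⁻ x, g x ∂μ := lintegral_mono' hle le_rfl

theorem stmt19_general {X : Type*} [MeasurableSpace X]
    (lam mu : Measure X) [IsProbabilityMeasure mu]
    (T : X → X) (hT : Ergodic T mu)
    (C : ℝ) (hC : 0 < C)
    (hdom : ∀ A : Set X, MeasurableSet A → ENNReal.ofReal C * lam A ≤ mu A)
    (Δ : ℕ → Set X)
    (hmeas : ∀ k : ℕ, 1 ≤ k → MeasurableSet (Δ k))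
    (hdisj : ∀ j k : ℕ, 1 ≤ j → 1 ≤ k → j ≠ k → Disjoint (Δ j) (Δ k))
    (hcover : (⋃ k : ℕ, Δ (k + 1)) = Set.univ)
    (hlam : ∀ k : ℕ, 1 ≤ k →
      lam (Δ k) = 1 / (((k : ℝ≥0∞) + 1) * ((k : ℝ≥0∞) + 2)))
    (f : X → ℝ)
    (hf : ∀ k : ℕ, 1 ≤ k → ∀ x ∈ Δ k, f x = (k : ℝ)) :
    (∀ᵐ x ∂mu,
      Tendsto (fun n : ℕ => (∑ j ∈ Finset.range n, f (T^[j] x)) / n) atTop atTop) ∧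
    (∀ᵐ x ∂lam,
      Tendsto (fun n : ℕ => (∑ j ∈ Finset.range n, f (T^[j] x)) / n) atTop atTop) := by
  have hΔ : ∀ k : ℕ, MeasurableSet (Δ (k + 1)) := fun k => hmeas (k + 1) k.succ_pos
  have hΔ_disj : Pairwise (Disjoint on fun k => Δ (k + 1)) := fun j k hjk =>
    hdisj (j + 1) (k + 1) j.succ_pos k.succ_pos (by omega)
  have hf_eqOn : ∀ k : ℕ, EqOn f (fun _ => ((k + 1 : ℕ) : ℝ)) (Δ (k + 1)) := fun k =>
    hf (k + 1) k.succ_pos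
  have hfm : Measurable f := measurable_of_eqOn_const_of_iUnion_eq_univ hΔ hcover hf_eqOn
  have hf0 : ∀ x, 0 ≤ f x := fun x => by
    obtain ⟨k, hk⟩ := mem_iUnion.1 (hcover ▸ mem_univ x)
    rw [hf_eqOn k hk]
    positivity
  have hlam_top : ∫⁻ x, ENNReal.ofReal (f x) ∂lam = ∞ := by
    rw [lintegral_eq_tsum_of_eqOn_const hΔ hΔ_disj hcover
      (fun k x hx => by rw [hf_eqOn k hx, ENNReal.ofReal_natCast]) lam]
    convert ENNReal.tsum_succ_mul_one_div_succ_mul_succ_eq_top using 3 with k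
    rw [hlam (k + 1) k.succ_pos]
    push_cast
    rfl
  have hC' : ENNReal.ofReal C ≠ 0 := (ENNReal.ofReal_pos.2 hC).ne'
  have hle : ENNReal.ofReal C • lam ≤ mu := Measure.le_iff.2 fun A hA => hdom A hA
  have hmu := hT.ae_tendsto_birkhoffAverage_atTop hfm (ae_of_all _ hf0)
    (lintegral_eq_top_of_smul_le hC' hle hlam_top)
  simp only [birkhoffAverage, birkhoffSum, smul_eq_mul, ← div_eq_inv_mul] at hmu
  exact ⟨hmu, ((Measure.absolutelyContinuous_smul hC').trans
    (Measure.absolutelyContinuous_of_le hle)).ae_le hmu⟩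

/-- Birkhoff-average divergence: if T is ergodic for the probability measure μ, μ
dominates C·lam, the sets Δ_k (k ≥ 1) are disjoint, measurable, cover X and have
lam-measure 1/((k+1)(k+2)), and f = k on Δ_k, then the Birkhoff averages
(1/n)∑_{j<n} f(Tʲx) tend to ∞ for μ-a.e. x, and hence for lam-a.e. x. -/
theorem stmt19 {X : Type*} [MeasurableSpace X]
    (lam mu : Measure X) [IsFiniteMeasure lam] [IsProbabilityMeasure mu]
    (T : X → X) (hT : Ergodic T mu)
    (C : ℝ) (hC : 0 < C)
    (hdom : ∀ A : Set X, MeasurableSet A → ENNReal.ofReal C * lam A ≤ mu A)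
    (Δ : ℕ → Set X)
    (hmeas : ∀ k : ℕ, 1 ≤ k → MeasurableSet (Δ k))
    (hdisj : ∀ j k : ℕ, 1 ≤ j → 1 ≤ k → j ≠ k → Disjoint (Δ j) (Δ k))
    (hcover : (⋃ k : ℕ, Δ (k + 1)) = Set.univ)
    (hlam : ∀ k : ℕ, 1 ≤ k →
      lam (Δ k) = 1 / (((k : ℝ≥0∞) + 1) * ((k : ℝ≥0∞) + 2)))
    (f : X → ℝ)
    (hf : ∀ k : ℕ, 1 ≤ k → ∀ x ∈ Δ k, f x = (k : ℝ)) :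
    (∀ᵐ x ∂mu,
      Tendsto (fun n : ℕ => (∑ j ∈ Finset.range n, f (T^[j] x)) / n) atTop atTop) ∧
    (∀ᵐ x ∂lam,
      Tendsto (fun n : ℕ => (∑ j ∈ Finset.range n, f (T^[j] x)) / n) atTop atTop) :=
  stmt19_general lam mu T hT C hC hdom Δ hmeas hdisj hcover hlam f hf
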